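/- There exists a constant c such that for all n ≥ 2, the minimum number k_n of stacks in series required to sort every permutation of n elements satisfies k_n ≥ (1/2)·log₂ n − c. -/

import Mathlib

/-- A configuration ("state") of a system of `k` stacks in series: container `0`
is the input queue (front at the head of the list), containers `1, …, k` are the
stacks (top at the head), and container `k+1` is the output queue (front at the head). -/
abbrev Conf (k : ℕ) : Type := Fin (k + 2) → List ℕ

/-- Apply the move `m_{i+1}` (for `i : Fin (k+1)`): remove the element at the head of
container `i` and move it to container `i+1` (pushed on top if the destination is a
stack, appended at the back if it is the output queue).  Returns `none` (the illegal
state `∅`) if the source container is empty. -/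
def applyMove {k : ℕ} (i : Fin (k + 1)) (s : Conf k) : Option (Conf k) :=
  match s i.castSucc with
  | [] => none
  | x :: rest =>
      some fun j =>
        if j = i.castSucc then rest
        else if j = i.succ then
          (if (j : ℕ) = k + 1 then s j ++ [x] else x :: s j)
        else s j

/-- The action `w ∗ s` of a string of moves on an (optional) state; moves are applied
left to right, and the illegal state `none` is absorbing. -/
def act {k : ℕ} (w : List (Fin (k + 1))) (s : Option (Conf k)) : Option (Conf k) :=
  w.foldl (fun t i => t.bind (applyMove i)) s

/-- The initial state `I(n,k)`: the input queue holds `1, …, n` (front to back),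
and everything else is empty. -/
def initConf (n k : ℕ) : Conf k :=
  fun j => if (j : ℕ) = 0 then List.range' 1 n else []

/-- The final state whose output queue holds `out` (front to back), all else empty. -/
def finalConf (k : ℕ) (out : List ℕ) : Conf k :=
  fun j => if (j : ℕ) = k + 1 then out else []

/-- `π ∈ Sₙ` is generated by `k` stacks in series if some string of moves takes
`I(n,k)` to the final state with output queue `π(1), …, π(n)` (front to back). -/
def Generates (n k : ℕ) (π : Equiv.Perm (Fin n)) : Prop :=
  ∃ w : List (Fin (k + 1)),
    act w (some (initConf n k)) = some (finalConf k (List.ofFn fun j => (π j : ℕ) + 1))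

/-- `P(n,k)`, the set of permutations of `n` elements generated by `k` stacks in series. -/
def GenPerms (n k : ℕ) : Set (Equiv.Perm (Fin n)) := {π | Generates n k π}

/-- `k_n`, the least number of stacks needed to generate (equivalently, sort) every
permutation of `n` elements. -/
noncomputable def kStacks (n : ℕ) : ℕ := sInf {k | ∀ π : Equiv.Perm (Fin n), Generates n k π}

/-- Two move strings are equivalent, `u ∼ v`, if they act identically on every state. -/
def MoveEquiv {k : ℕ} (u v : List (Fin (k + 1))) : Prop :=
  ∀ s : Conf k, act u (some s) = act v (some s)


-- infra
lemma act_nil {k : ℕ} (s : Option (Conf k)) : act [] s = s := rfl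
lemma act_cons {k : ℕ} (a : Fin (k+1)) (w : List (Fin (k+1))) (s : Option (Conf k)) :
    act (a :: w) s = act w (s.bind (applyMove a)) := rfl
lemma act_append {k : ℕ} (u v : List (Fin (k+1))) (s : Option (Conf k)) :
    act (u ++ v) s = act v (act u s) := by
  simp [act, List.foldl_append]
lemma act_none {k : ℕ} (w : List (Fin (k+1))) : act w (none : Option (Conf k)) = none := by
  induction w with
  | nil => rfl
  | cons a w ih => rw [act_cons]; simpa using ih

lemma applyMove_none {k : ℕ} {i : Fin (k+1)} {s : Conf k} (h : s i.castSucc = []) :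
    applyMove i s = none := by
  unfold applyMove; rw [h]

lemma applyMove_some {k : ℕ} {i : Fin (k+1)} {s : Conf k} {x : ℕ} {rest : List ℕ}
    (h : s i.castSucc = x :: rest) :
    applyMove i s = some fun j =>
        if j = i.castSucc then rest
        else if j = i.succ then
          (if (j : ℕ) = k + 1 then s j ++ [x] else x :: s j)
        else s j := by
  unfold applyMove; rw [h]

def mv {k : ℕ} (i : Fin (k+1)) (x : ℕ) (rest : List ℕ) (s : Conf k) : Conf k :=
  fun j => if j = i.castSucc then rest
        else if j = i.succ then
          (if (j : ℕ) = k + 1 then s j ++ [x] else x :: s j)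
        else s j

lemma applyMove_some' {k : ℕ} {i : Fin (k+1)} {s : Conf k} {x : ℕ} {rest : List ℕ}
    (h : s i.castSucc = x :: rest) : applyMove i s = some (mv i x rest s) := by
  unfold applyMove mv; rw [h]

lemma applyMove_comm {k : ℕ} {a b : Fin (k+1)} (hab : (a:ℕ)+1 < (b:ℕ)) (s : Conf k) :
    (applyMove a s).bind (applyMove b) = (applyMove b s).bind (applyMove a) := by
  have hbk : (b:ℕ) ≤ k := Nat.lt_succ_iff.mp b.isLt
  rcases ha : s a.castSucc with _ | ⟨x, ra⟩
  · rw [applyMove_none ha, Option.bind_none]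
    rcases hb : s b.castSucc with _ | ⟨y, rb⟩
    · rw [applyMove_none hb, Option.bind_none]
    · rw [applyMove_some' hb, Option.bind_some]
      refine (applyMove_none ?_).symm
      simp only [mv]
      rw [if_neg (by simp [Fin.ext_iff]; omega), if_neg (by simp [Fin.ext_iff]; omega), ha]
  · rcases hb : s b.castSucc with _ | ⟨y, rb⟩
    · rw [applyMove_none hb, Option.bind_none, applyMove_some' ha, Option.bind_some]
      refine applyMove_none ?_
      simp only [mv]
      rw [if_neg (by simp [Fin.ext_iff]; omega), if_neg (by simp [Fin.ext_iff]; omega), hb]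
    · rw [applyMove_some' ha, Option.bind_some, applyMove_some' hb, Option.bind_some]
      have t1b : mv a x ra s b.castSucc = y :: rb := by
        simp only [mv]
        rw [if_neg (by simp [Fin.ext_iff]; omega), if_neg (by simp [Fin.ext_iff]; omega), hb]
      have t2a : mv b y rb s a.castSucc = x :: ra := by
        simp only [mv]
        rw [if_neg (by simp [Fin.ext_iff]; omega), if_neg (by simp [Fin.ext_iff]; omega), ha]
      rw [applyMove_some' t1b, applyMove_some' t2a]
      congr 1
      funext j
      simp only [mv]
      split_ifs <;>
        first
          | rfl
          | (exfalso; simp only [Fin.ext_iff, Fin.coe_castSucc, Fin.val_succ] at *; omega)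

lemma bind_comm' {k : ℕ} {a b : Fin (k+1)} (hab : (a:ℕ)+1 < (b:ℕ) ∨ (b:ℕ)+1 < (a:ℕ))
    (s : Option (Conf k)) :
    (s.bind (applyMove a)).bind (applyMove b) = (s.bind (applyMove b)).bind (applyMove a) := by
  cases s with
  | none => rfl
  | some s =>
      simp only [Option.bind_some]
      rcases hab with h | h
      · exact applyMove_comm h s
      · exact (applyMove_comm h s).symm

lemma act_bubble {k : ℕ} {a : Fin (k+1)} {p q : List (Fin (k+1))}
    (h : ∀ b ∈ p, (a:ℕ)+1 < (b:ℕ) ∨ (b:ℕ)+1 < (a:ℕ)) (s : Option (Conf k)) :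
    act (p ++ a :: q) s = act (a :: (p ++ q)) s := by
  induction p generalizing s with
  | nil => rfl
  | cons c p ih =>
      have hc := h c List.mem_cons_self
      have h' : ∀ b ∈ p, (a:ℕ)+1 < (b:ℕ) ∨ (b:ℕ)+1 < (a:ℕ) := fun b hb => h b (List.mem_cons_of_mem _ hb)
      calc act ((c :: p) ++ a :: q) s = act (p ++ a :: q) (s.bind (applyMove c)) := rfl
        _ = act (a :: (p ++ q)) (s.bind (applyMove c)) := ih h' _
        _ = act (p ++ q) ((s.bind (applyMove c)).bind (applyMove a)) := rfl
        _ = act (p ++ q) ((s.bind (applyMove a)).bind (applyMove c)) := by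
              rw [bind_comm' (by tauto) s]
        _ = act (a :: ((c :: p) ++ q)) s := rfl

def pairProj {k : ℕ} (i : ℕ) (w : List (Fin (k+1))) : List (Fin (k+1)) :=
  w.filter (fun a => decide ((a:ℕ) = i) || decide ((a:ℕ) = i+1))

lemma pairProj_cons {k : ℕ} (i : ℕ) (a : Fin (k+1)) (w : List (Fin (k+1))) :
    pairProj i (a :: w) =
      if (a:ℕ) = i ∨ (a:ℕ) = i+1 then a :: pairProj i w else pairProj i w := by
  simp only [pairProj, List.filter_cons]
  by_cases h : (a:ℕ) = i ∨ (a:ℕ) = i+1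
  · rw [if_pos h, if_pos]
    rcases h with h | h <;> simp [h]
  · rw [if_neg h, if_neg]
    push_neg at h
    simp [h.1, h.2]

lemma pairProj_append {k : ℕ} (i : ℕ) (u v : List (Fin (k+1))) :
    pairProj i (u ++ v) = pairProj i u ++ pairProj i v := by
  simp [pairProj, List.filter_append]

lemma mem_pairProj {k : ℕ} {i : ℕ} {a : Fin (k+1)} {w : List (Fin (k+1))}
    (h : a ∈ pairProj i w) : a ∈ w ∧ ((a:ℕ) = i ∨ (a:ℕ) = i+1) := by
  have h1 := List.mem_of_mem_filter h
  have h2 := List.of_mem_filter h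
  simp at h2
  exact ⟨h1, h2⟩

lemma mem_pairProj_of {k : ℕ} {i : ℕ} {a : Fin (k+1)} {w : List (Fin (k+1))}
    (hm : a ∈ w) (hv : (a:ℕ) = i ∨ (a:ℕ) = i+1) : a ∈ pairProj i w := by
  apply List.mem_filter_of_mem hm
  simpa using hv

lemma proj_determines {k : ℕ} : ∀ (N : ℕ) (w w' : List (Fin (k+1))), w.length = N →
    (∀ a, w.count a = w'.count a) →
    (∀ i : ℕ, i + 1 ≤ k → pairProj i w = pairProj i w') →
    ∀ s : Conf k, act w (some s) = act w' (some s) := by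
  intro N
  induction N with
  | zero =>
      intro w w' hlen hcount _ s
      have hw : w = [] := List.eq_nil_of_length_eq_zero hlen
      subst hw
      have hw' : w' = [] := by
        rw [List.eq_nil_iff_forall_not_mem]
        intro a ha
        have h1 := hcount a
        rw [List.count_nil] at h1
        exact absurd (List.count_pos_iff.mpr ha) (by omega)
      rw [hw']
  | succ N ih =>
      intro w w' hlen hcount hproj s
      cases w with
      | nil => simp at hlen
      | cons a u =>
        have hmem : a ∈ w' := by
          refine List.count_pos_iff.mp ?_
          have h1 := hcount a
          rw [List.count_cons_self] at h1
          omega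
        set p := w'.takeWhile (fun b => !decide (b = a)) with hp
        set d := w'.dropWhile (fun b => !decide (b = a)) with hd
        have hw' : w' = p ++ d := (List.takeWhile_append_dropWhile (l := w')).symm
        have hpa : ∀ b ∈ p, b ≠ a := by
          intro b hb
          have := List.mem_takeWhile_imp hb
          simpa using this
        have hdne : d ≠ [] := by
          intro h0
          rw [h0, List.append_nil] at hw'
          exact hpa a (hw' ▸ hmem) rfl
        have hdhead : d.head hdne = a := by
          have h2 := List.head_dropWhile_not (fun b => !decide (b = a)) (l := w') hdne
          simpa using h2
        obtain ⟨q, hq⟩ : ∃ q, d = a :: q := ⟨d.tail, by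
          rw [← hdhead]; exact (List.cons_head_tail hdne).symm⟩
        rw [hq] at hw'
        -- non-adjacency of everything in p with a
        have hnonadj : ∀ b ∈ p, (a:ℕ)+1 < (b:ℕ) ∨ (b:ℕ)+1 < (a:ℕ) := by
          intro b hb
          by_contra hcon
          push_neg at hcon
          have hne : (b:ℕ) ≠ (a:ℕ) := fun h => hpa b hb (Fin.ext h)
          -- so b and a are adjacent
          set i := min (a:ℕ) (b:ℕ) with hi
          have hik : i + 1 ≤ k := by
            have ha' := a.isLt
            have hb' := b.isLt
            omega
          have hpra : (a:ℕ) = i ∨ (a:ℕ) = i + 1 := by omega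
          have hprb : (b:ℕ) = i ∨ (b:ℕ) = i + 1 := by omega
          have heq := hproj i hik
          rw [hw', pairProj_append, pairProj_cons, if_pos hpra, pairProj_cons, if_pos hpra] at heq
          -- heq : a :: pairProj i u = pairProj i p ++ a :: pairProj i q
          cases hfp : pairProj i p with
          | nil =>
              exact absurd (mem_pairProj_of hb hprb) (by rw [hfp]; simp)
          | cons c L =>
              rw [hfp, List.cons_append] at heq
              injection heq with h1 _
              have := mem_pairProj (hfp ▸ (List.mem_cons_self : c ∈ c :: L))
              exact hpa c this.1 h1.symm
        have hprojp_nil : ∀ i : ℕ, i + 1 ≤ k → ((a:ℕ) = i ∨ (a:ℕ) = i+1) →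
            pairProj i p = [] := by
          intro i hik hpra
          rw [List.eq_nil_iff_forall_not_mem]
          intro c hc
          obtain ⟨hcp, hcv⟩ := mem_pairProj hc
          have := hnonadj c hcp
          omega
        -- bubble a to the front of w'
        have hbub := act_bubble (q := q) hnonadj (some s)
        rw [hw', hbub, act_cons, act_cons, Option.bind_some]
        cases hs' : applyMove a s with
        | none => rw [act_none, act_none]
        | some s' =>
            apply ih u (p ++ q) (by simpa using hlen)
            · intro c
              have h1 := hcount c
              rw [hw'] at h1
              simp only [List.count_cons, List.count_append] at h1 ⊢
              omega
            · intro i hik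
              have heq := hproj i hik
              rw [hw'] at heq
              rw [pairProj_append, pairProj_cons, pairProj_cons] at heq
              rw [pairProj_append]
              by_cases hpra : (a:ℕ) = i ∨ (a:ℕ) = i+1
              · rw [if_pos hpra, if_pos hpra, hprojp_nil i hik hpra,
                  List.nil_append] at heq
                injection heq with _ h2
                rw [hprojp_nil i hik hpra, List.nil_append]
                exact h2
              · rw [if_neg hpra, if_neg hpra] at heq
                exact heq

def countOut {k : ℕ} (j : Fin (k+2)) (w : List (Fin (k+1))) : ℕ :=
  w.countP (fun a => decide (a.castSucc = j))
def countIn {k : ℕ} (j : Fin (k+2)) (w : List (Fin (k+1))) : ℕ :=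
  w.countP (fun a => decide (a.succ = j))

lemma flow {k : ℕ} : ∀ (w : List (Fin (k+1))) (s t : Conf k), act w (some s) = some t →
    ∀ j : Fin (k+2), (t j).length + countOut j w = (s j).length + countIn j w := by
  intro w
  induction w with
  | nil =>
      intro s t h j
      rw [act_nil] at h
      injection h with h
      subst h
      simp [countOut, countIn]
  | cons a u ih =>
      intro s t h j
      rw [act_cons, Option.bind_some] at h
      rcases ha : s a.castSucc with _ | ⟨x, ra⟩
      · rw [applyMove_none ha, act_none] at h; cases h
      · rw [applyMove_some' ha] at h
        have hIH := ih _ t h j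
        have hO : countOut j (a::u) = countOut j u + (if a.castSucc = j then 1 else 0) := by
          simp only [countOut, List.countP_cons]
          by_cases hj : a.castSucc = j <;> simp [hj]
        have hI : countIn j (a::u) = countIn j u + (if a.succ = j then 1 else 0) := by
          simp only [countIn, List.countP_cons]
          by_cases hj : a.succ = j <;> simp [hj]
        have hcs : a.castSucc ≠ a.succ := by
          simp [Fin.ext_iff]
        by_cases hj1 : j = a.castSucc
        · have hmv : mv a x ra s j = ra := by
            rw [hj1]; simp [mv]
          rw [hmv] at hIH
          rw [hO, hI, if_pos hj1.symm,
            if_neg (by rw [hj1]; exact fun hh => hcs hh.symm)]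
          rw [hj1, ha]
          simp only [List.length_cons]
          rw [hj1] at hIH
          omega
        · by_cases hj2 : j = a.succ
          · have hne : ¬ a.succ = a.castSucc := fun hh => hcs hh.symm
            have hmv : (mv a x ra s j).length = (s j).length + 1 := by
              rw [hj2]
              simp only [mv]
              rw [if_neg hne, if_pos trivial]
              split_ifs <;> simp
            rw [hmv] at hIH
            rw [hO, hI, if_neg (by rw [hj2]; exact fun hh => hcs hh), if_pos hj2.symm]
            omega
          · have hmv : mv a x ra s j = s j := by
              simp only [mv, if_neg hj1, if_neg hj2]
            rw [hmv] at hIH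
            rw [hO, hI, if_neg (fun hh => hj1 hh.symm), if_neg (fun hh => hj2 hh.symm)]
            omega

lemma countOut_castSucc {k : ℕ} (a : Fin (k+1)) (w : List (Fin (k+1))) :
    countOut a.castSucc w = w.count a := by
  unfold countOut
  rw [List.count]
  apply List.countP_congr
  intro b _
  simp [Fin.castSucc_inj]

lemma countIn_succ {k : ℕ} (a : Fin (k+1)) (w : List (Fin (k+1))) :
    countIn a.succ w = w.count a := by
  unfold countIn
  rw [List.count]
  apply List.countP_congr
  intro b _
  simp [Fin.succ_inj]

lemma countIn_zero {k : ℕ} (w : List (Fin (k+1))) :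
    countIn (⟨0, by omega⟩ : Fin (k+2)) w = 0 := by
  unfold countIn
  rw [List.countP_eq_zero]
  intro b _
  simp only [decide_eq_true_eq, Fin.ext_iff, Fin.val_succ, Fin.val_mk]
  omega

lemma count_all {k n : ℕ} {w : List (Fin (k+1))} {out : List ℕ} (hlen : out.length = n)
    (h : act w (some (initConf n k)) = some (finalConf k out)) (a : Fin (k+1)) :
    w.count a = n := by
  have F := flow w _ _ h
  have base : ∀ m : ℕ, ∀ hm : m < k+1, w.count (⟨m, hm⟩ : Fin (k+1)) = n := by
    intro m
    induction m with
    | zero =>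
        intro hm
        have hF := F ⟨0, by omega⟩
        have h1 : finalConf k out ⟨0, by omega⟩ = [] := by
          simp [finalConf]
        have h2 : initConf n k ⟨0, by omega⟩ = List.range' 1 n := by
          simp [initConf]
        have h3 : (⟨0, by omega⟩ : Fin (k+2)) = (⟨0, hm⟩ : Fin (k+1)).castSucc := by
          simp [Fin.ext_iff]
        rw [h1, h2, h3, countOut_castSucc, ← h3, countIn_zero] at hF
        simp only [List.length_nil, List.length_range', Nat.zero_add, Nat.add_zero] at hF
        simpa using hF
    | succ m ihm =>
        intro hm
        have hm' : m < k+1 := by omega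
        have hF := F ⟨m+1, by omega⟩
        have h1 : finalConf k out ⟨m+1, by omega⟩ = [] := by
          have hne : ¬ (m+1 = k+1) := by omega
          simp [finalConf, hne]
          intro h; exact absurd h (by omega)
        have h2 : initConf n k ⟨m+1, by omega⟩ = [] := by
          have hne : ¬ (m+1 = 0) := by omega
          simp [initConf, hne]
        have h3 : (⟨m+1, by omega⟩ : Fin (k+2)) = (⟨m+1, hm⟩ : Fin (k+1)).castSucc := by
          simp [Fin.ext_iff]
        have h4 : (⟨m+1, by omega⟩ : Fin (k+2)) = (⟨m, hm'⟩ : Fin (k+1)).succ := by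
          simp [Fin.ext_iff]
        rw [h1, h2] at hF
        rw [h3, countOut_castSucc] at hF
        rw [← h3, h4, countIn_succ] at hF
        rw [ihm hm'] at hF
        simpa using hF
  have ha : a = ⟨(a:ℕ), a.isLt⟩ := Fin.ext rfl
  rw [ha]
  exact base _ _

def mk' (n : ℕ) (i : ℕ) : Fin (n+1) := ⟨min i n, by omega⟩

lemma applyMove_spec {n : ℕ} (i₀ : ℕ) (hi : i₀ ≤ n) (s : Conf n) (x : ℕ) (rest : List ℕ)
    (hsrc : s ⟨i₀, by omega⟩ = x :: rest) :
    applyMove (mk' n i₀) s = some (fun c : Fin (n+2) =>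
      if (c:ℕ) = i₀ then rest
      else if (c:ℕ) = i₀+1 then (if i₀+1 = n+1 then s c ++ [x] else x :: s c)
      else s c) := by
  have hcast : (mk' n i₀).castSucc = (⟨i₀, by omega⟩ : Fin (n+2)) := by
    simp only [mk', Fin.ext_iff, Fin.coe_castSucc]
    omega
  rw [applyMove_some' (by rw [hcast]; exact hsrc)]
  congr 1
  funext c
  simp only [mv]
  have hc1 : (c = (mk' n i₀).castSucc) ↔ ((c:ℕ) = i₀) := by
    simp only [Fin.ext_iff, Fin.coe_castSucc, mk']
    omega
  have hc2 : (c = (mk' n i₀).succ) ↔ ((c:ℕ) = i₀+1) := by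
    simp only [Fin.ext_iff, Fin.val_succ, mk']
    omega
  by_cases h1 : (c:ℕ) = i₀
  · rw [if_pos (hc1.mpr h1), if_pos h1]
  · rw [if_neg (fun hh => h1 (hc1.mp hh)), if_neg h1]
    by_cases h2 : (c:ℕ) = i₀+1
    · rw [if_pos (hc2.mpr h2), if_pos h2, h2]
    · rw [if_neg (fun hh => h2 (hc2.mp hh)), if_neg h2]

section Construction

variable {n : ℕ} (π : Equiv.Perm (Fin n))

def outL : List ℕ := List.ofFn (fun j => ((π j : ℕ) + 1))

lemma outL_length : (outL π).length = n := by simp [outL]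

lemma outL_getD {j : ℕ} (h : j < n) :
    (outL π).getD j 0 = ((π ⟨j, h⟩ : Fin n) : ℕ) + 1 := by
  rw [List.getD_eq_getElem (l := outL π) (d := 0) (by rw [outL_length]; exact h)]
  simp [outL]

def gD (c : ℕ) : ℕ := (outL π).getD (n - c) 0

def rk (v : ℕ) : ℕ := if h : v < n then ((π.symm ⟨v, h⟩ : Fin n) : ℕ) else 0

lemma rk_lt {v : ℕ} (h : v < n) : rk π v < n := by
  rw [rk, dif_pos h]
  exact (π.symm ⟨v, h⟩).isLt

lemma gD_eq {c : ℕ} (h1 : 1 ≤ c) (h2 : c ≤ n) :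
    gD π c = ((π ⟨n - c, by omega⟩ : Fin n) : ℕ) + 1 := by
  rw [gD, outL_getD π (by omega)]

lemma gD_bounds {c : ℕ} (h1 : 1 ≤ c) (h2 : c ≤ n) : 1 ≤ gD π c ∧ gD π c ≤ n := by
  rw [gD_eq π h1 h2]
  have := (π ⟨n - c, by omega⟩).isLt
  omega

lemma gD_inj {c c' : ℕ} (h1 : 1 ≤ c) (h2 : c ≤ n) (h1' : 1 ≤ c') (h2' : c' ≤ n)
    (h : gD π c = gD π c') : c = c' := by
  rw [gD_eq π h1 h2, gD_eq π h1' h2'] at h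
  have h3 : π ⟨n - c, by omega⟩ = π ⟨n - c', by omega⟩ := by
    apply Fin.ext; omega
  have h4 := π.injective h3
  rw [Fin.ext_iff] at h4
  simp at h4
  omega

lemma gD_park {v : ℕ} (h : v < n) : gD π (n - rk π v) = v + 1 := by
  have hr := rk_lt π h
  have h1 : 1 ≤ n - rk π v := by omega
  have h2 : n - rk π v ≤ n := by omega
  rw [gD_eq π h1 h2]
  have h3 : (⟨n - (n - rk π v), by omega⟩ : Fin n) = π.symm ⟨v, h⟩ := by
    apply Fin.ext
    simp only [rk, dif_pos h]
    omega
  rw [h3, Equiv.apply_symm_apply]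

def SB (v c : ℕ) : List ℕ := if 1 ≤ c ∧ c ≤ n ∧ gD π c ≤ v then [gD π c] else []

def SC (v : ℕ) : Conf n := fun c =>
  if (c:ℕ) = 0 then List.range' (v+1) (n-v) else SB π v (c:ℕ)

def TCf (v i : ℕ) : Conf n := fun c =>
  if (c:ℕ) = 0 then List.range' (v+2) (n-(v+1))
  else if (c:ℕ) = i then (v+1) :: SB π v (c:ℕ) else SB π v (c:ℕ)

lemma SC_zero : SC π 0 = initConf n n := by
  funext c
  simp only [SC, initConf, SB]
  by_cases hc : (c:ℕ) = 0
  · simp [hc]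
  · rw [if_neg hc, if_neg hc, if_neg]
    rintro ⟨hl, hr, hg⟩
    have := gD_bounds π hl hr
    omega

lemma block_first {v : ℕ} (hv : v < n) :
    applyMove (mk' n 0) (SC π v) = some (TCf π v 1) := by
  have hsrc : SC π v ⟨0, by omega⟩ = (v+1) :: List.range' (v+2) (n-(v+1)) := by
    simp only [SC]
    rw [if_pos trivial]
    have h1 : n - v = (n - (v+1)) + 1 := by omega
    rw [h1, List.range'_succ]
  rw [applyMove_spec 0 (by omega) _ _ _ hsrc]
  congr 1
  funext c
  simp only [SC, TCf, SB]
  split_ifs <;> first | rfl | omega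

lemma block_mid {v i : ℕ} (hv : v < n) (hi1 : 1 ≤ i) (hi2 : i < n - rk π v) :
    applyMove (mk' n i) (TCf π v i) = some (TCf π v (i+1)) := by
  have hval : ((⟨i, by omega⟩ : Fin (n+2)) : ℕ) = i := rfl
  have hsrc : TCf π v i ⟨i, by omega⟩ = (v+1) :: SB π v i := by
    simp only [TCf, hval]
    rw [if_neg (by omega), if_pos trivial]
  rw [applyMove_spec i (by omega) _ _ _ hsrc]
  congr 1
  funext c
  simp only [TCf, SB]
  by_cases hci : (c:ℕ) = i
  · rw [hci]
    split_ifs <;> first | rfl | omega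
  · split_ifs <;> first | rfl | omega

lemma block_end {v : ℕ} (hv : v < n) : TCf π v (n - rk π v) = SC π (v+1) := by
  have hr := rk_lt π hv
  have hpark := gD_park π hv
  funext c
  by_cases hc0 : (c:ℕ) = 0
  · simp only [TCf, SC, if_pos hc0]
  · by_cases hcP : (c:ℕ) = n - rk π v
    · have h1 : gD π (c:ℕ) = v + 1 := by rw [hcP]; exact hpark
      simp only [TCf, SC, SB, if_neg hc0, if_pos hcP]
      rw [if_neg (by omega), if_pos (by refine ⟨by omega, by omega, by omega⟩)]
      rw [h1]
    · by_cases hcn : 1 ≤ (c:ℕ) ∧ (c:ℕ) ≤ n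
      · have hne : gD π (c:ℕ) ≠ v + 1 := fun hg =>
          hcP (gD_inj π hcn.1 hcn.2 (by omega) (by omega) (hg.trans hpark.symm))
        simp only [TCf, SC, SB, if_neg hc0, if_neg hcP]
        split_ifs <;> first | rfl | (exfalso; omega)
      · simp only [TCf, SC, SB, if_neg hc0, if_neg hcP]
        split_ifs <;> first | rfl | (exfalso; omega)


lemma block_run {v : ℕ} (hv : v < n) :
    ∀ (m i : ℕ), 1 ≤ i → i + m ≤ n - rk π v →
    act ((List.range' i m).map (mk' n)) (some (TCf π v i)) = some (TCf π v (i+m)) := by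
  intro m
  induction m with
  | zero => intro i _ _; simp [act_nil]
  | succ m ih =>
      intro i hi1 hi2
      rw [List.range'_succ, List.map_cons, act_cons, Option.bind_some]
      rw [block_mid π hv hi1 (by omega)]
      have hh : i + (m+1) = (i+1) + m := by omega
      rw [hh]
      exact ih (i+1) (by omega) (by omega)

lemma block_full {v : ℕ} (hv : v < n) :
    act ((List.range (n - rk π v)).map (mk' n)) (some (SC π v)) = some (SC π (v+1)) := by
  have hr := rk_lt π hv
  have hP : n - rk π v = (n - rk π v - 1) + 1 := by omega
  rw [List.range_eq_range', hP, List.range'_succ, List.map_cons, act_cons, Option.bind_some]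
  rw [block_first π hv]
  have h2 := block_run π hv (n - rk π v - 1) 1 (by omega) (by omega)
  have h3 : 1 + (n - rk π v - 1) = n - rk π v := by omega
  rw [h3] at h2
  rw [h2, block_end π hv]

def phase1W : List (Fin (n+1)) :=
  (List.range n).flatMap (fun v => (List.range (n - rk π v)).map (mk' n))

lemma phase1_run : ∀ v ≤ n,
    act ((List.range v).flatMap (fun u => (List.range (n - rk π u)).map (mk' n)))
      (some (SC π 0)) = some (SC π v) := by
  intro v
  induction v with
  | zero => intro _; simp [act_nil]
  | succ v ih =>
      intro hv
      rw [List.range_succ, List.flatMap_append, act_append, ih (by omega)]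
      simp only [List.flatMap_cons, List.flatMap_nil, List.append_nil]
      exact block_full π (by omega)

def QC (j : ℕ) : Conf n := fun c =>
  if (c:ℕ) = 0 then []
  else if 1 ≤ (c:ℕ) ∧ (c:ℕ) + j ≤ n then [gD π (c:ℕ)]
  else if (c:ℕ) = n+1 then (outL π).take j else []

def RC (j i : ℕ) : Conf n := fun c =>
  if (c:ℕ) = i then [(outL π).getD j 0]
  else if 1 ≤ (c:ℕ) ∧ (c:ℕ) + (j+1) ≤ n then [gD π (c:ℕ)]
  else if (c:ℕ) = n+1 then (outL π).take j else []

lemma SC_n_eq_QC0 : SC π n = QC π 0 := by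
  funext c
  simp only [SC, QC, SB]
  by_cases hc0 : (c:ℕ) = 0
  · simp [hc0]
  · rw [if_neg hc0, if_neg hc0]
    by_cases hcn : 1 ≤ (c:ℕ) ∧ (c:ℕ) ≤ n
    · have := gD_bounds π hcn.1 hcn.2
      rw [if_pos ⟨hcn.1, hcn.2, this.2⟩, if_pos ⟨hcn.1, by omega⟩]
    · rw [if_neg (by omega), if_neg (by omega)]
      split_ifs <;> simp

lemma QC_eq_RC {j : ℕ} (hj : j < n) : QC π j = RC π j (n - j) := by
  funext c
  simp only [QC, RC]
  by_cases hci : (c:ℕ) = n - j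
  · rw [hci, if_pos rfl]
    rw [if_neg (by omega), if_pos (by omega)]
    have : gD π (n - j) = (outL π).getD j 0 := by
      rw [gD]
      congr 1
      omega
    rw [this]
  · rw [if_neg hci]
    by_cases hc0 : (c:ℕ) = 0
    · rw [if_pos hc0, if_neg (by omega), if_neg (by omega)]
    · rw [if_neg hc0]
      split_ifs <;> first | rfl | omega

lemma p2_mid {j i : ℕ} (hj : j < n) (hi1 : n - j ≤ i) (hi2 : i < n) :
    applyMove (mk' n i) (RC π j i) = some (RC π j (i+1)) := by
  have hval : ((⟨i, by omega⟩ : Fin (n+2)) : ℕ) = i := rfl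
  have hsrc : RC π j i ⟨i, by omega⟩ = (outL π).getD j 0 :: [] := by
    simp only [RC, hval]
    rw [if_pos trivial]
  rw [applyMove_spec i (by omega) _ _ _ hsrc]
  congr 1
  funext c
  simp only [RC]
  by_cases hci : (c:ℕ) = i
  · rw [hci]
    split_ifs <;> first | rfl | (exfalso; omega)
  · split_ifs <;> first | rfl | (exfalso; omega)

lemma p2_last {j : ℕ} (hj : j < n) :
    applyMove (mk' n n) (RC π j n) = some (QC π (j+1)) := by
  have hval : ((⟨n, by omega⟩ : Fin (n+2)) : ℕ) = n := rfl
  have hsrc : RC π j n ⟨n, by omega⟩ = (outL π).getD j 0 :: [] := by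
    simp only [RC, hval]
    rw [if_pos trivial]
  rw [applyMove_spec n (by omega) _ _ _ hsrc]
  congr 1
  funext c
  simp only [RC, QC]
  have htake : (outL π).take j ++ [(outL π).getD j 0] = (outL π).take (j+1) := by
    rw [List.take_succ]
    congr 1
    have hjl : j < (outL π).length := by rw [outL_length]; exact hj
    rw [List.getElem?_eq_getElem hjl]
    simp only [Option.toList_some]
    congr 1
    rw [List.getD_eq_getElem (l := outL π) (d := 0) hjl]
  by_cases hci : (c:ℕ) = n
  · rw [hci]
    split_ifs <;> first | rfl | (exfalso; omega)
  · split_ifs <;> first | rfl | (exact htake) | (exfalso; omega)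

lemma p2_run {j : ℕ} (hj : j < n) :
    ∀ (m i : ℕ), n - j ≤ i → i + m ≤ n →
    act ((List.range' i m).map (mk' n)) (some (RC π j i)) = some (RC π j (i+m)) := by
  intro m
  induction m with
  | zero => intro i _ _; simp [act_nil]
  | succ m ih =>
      intro i hi1 hi2
      rw [List.range'_succ, List.map_cons, act_cons, Option.bind_some]
      rw [p2_mid π hj hi1 (by omega)]
      have hh : i + (m+1) = (i+1) + m := by omega
      rw [hh]
      exact ih (i+1) (by omega) (by omega)

lemma p2_step {j : ℕ} (hj : j < n) :
    act ((List.range' (n-j) (j+1)).map (mk' n)) (some (QC π j)) = some (QC π (j+1)) := by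
  rw [List.range'_1_concat, List.map_append, act_append]
  rw [QC_eq_RC π hj]
  have h2 := p2_run π hj j (n-j) (by omega) (by omega)
  rw [h2]
  have h3 : n - j + j = n := by omega
  rw [h3]
  simp only [List.map_cons, List.map_nil, act_cons, act_nil, Option.bind_some]
  rw [p2_last π hj]

def phase2W : List (Fin (n+1)) :=
  (List.range n).flatMap (fun j => (List.range' (n-j) (j+1)).map (mk' n))

lemma phase2_run : ∀ j ≤ n,
    act ((List.range j).flatMap (fun j' => (List.range' (n-j') (j'+1)).map (mk' n)))
      (some (QC π 0)) = some (QC π j) := by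
  intro j
  induction j with
  | zero => intro _; simp [act_nil]
  | succ j ih =>
      intro hj
      rw [List.range_succ, List.flatMap_append, act_append, ih (by omega)]
      simp only [List.flatMap_cons, List.flatMap_nil, List.append_nil]
      exact p2_step π (by omega)

lemma QC_n : QC π n = finalConf n (outL π) := by
  funext c
  simp only [QC, finalConf]
  by_cases hcn1 : (c:ℕ) = n+1
  · rw [if_neg (by omega), if_neg (by omega), if_pos hcn1, if_pos hcn1]
    have : (outL π).take n = (outL π).take (outL π).length := by rw [outL_length]
    rw [this, List.take_length]
  · split_ifs <;> first | rfl | (exfalso; omega)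

lemma generates_self : Generates n n π := by
  refine ⟨phase1W π ++ phase2W (n := n), ?_⟩
  rw [act_append]
  have h0 : initConf n n = SC π 0 := (SC_zero π).symm
  rw [h0]
  simp only [phase1W, phase2W]
  rw [phase1_run π n le_rfl, SC_n_eq_QC0 π, phase2_run π n le_rfl, QC_n π]
  rfl

end Construction

lemma countP_or_disj {α : Type*} (p q : α → Bool) :
    ∀ (l : List α), (∀ a ∈ l, ¬(p a = true ∧ q a = true)) →
      l.countP (fun a => p a || q a) = l.countP p + l.countP q := by
  intro l
  induction l with
  | nil => intro _; simp
  | cons a l ih =>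
      intro h
      have ha := h a List.mem_cons_self
      have ih' := ih (fun b hb => h b (List.mem_cons_of_mem _ hb))
      simp only [List.countP_cons, ih']
      cases hp : p a <;> cases hq : q a <;> simp [hp, hq] at ha ⊢ <;> omega

lemma countP_val_eq_count {k : ℕ} (w : List (Fin (k+1))) (i : ℕ) (hi : i < k+1) :
    w.countP (fun a : Fin (k+1) => decide ((a:ℕ) = i)) = w.count (⟨i, hi⟩ : Fin (k+1)) := by
  rw [List.count]
  apply List.countP_congr
  intro b _
  simp [Fin.ext_iff]

lemma pairProj_length {k n : ℕ} {w : List (Fin (k+1))}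
    (hcount : ∀ a : Fin (k+1), w.count a = n) {i : ℕ} (hik : i + 1 ≤ k) :
    (pairProj i w).length = 2 * n := by
  rw [pairProj, ← List.countP_eq_length_filter]
  rw [countP_or_disj _ _ w (by intro a _; simp; omega)]
  rw [countP_val_eq_count w i (by omega), countP_val_eq_count w (i+1) (by omega)]
  rw [hcount, hcount]
  omega

lemma pairProj_recover {k : ℕ} {i : ℕ} (hik : i + 1 ≤ k) (l : List (Fin (k+1)))
    (hl : ∀ a ∈ l, (a:ℕ) = i ∨ (a:ℕ) = i+1) :
    (l.map (fun a : Fin (k+1) => decide ((a:ℕ) = i))).map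
      (fun b => if b then (⟨i, by omega⟩ : Fin (k+1)) else ⟨i+1, by omega⟩) = l := by
  rw [List.map_map]
  conv_rhs => rw [← List.map_id l]
  apply List.map_congr_left
  intro a ha
  rcases hl a ha with h | h <;> simp [Function.comp, h, Fin.ext_iff] <;> omega

lemma card_bound {n k : ℕ} (hall : ∀ π : Equiv.Perm (Fin n), Generates n k π) :
    Nat.factorial n ≤ (2 ^ (2 * n)) ^ k := by
  classical
  set w : Equiv.Perm (Fin n) → List (Fin (k+1)) := fun π => Classical.choose (hall π) with hwdef
  have hw : ∀ π : Equiv.Perm (Fin n), act (w π) (some (initConf n k)) =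
      some (finalConf k (List.ofFn fun j => ((π j : ℕ) + 1))) :=
    fun π => Classical.choose_spec (hall π)
  have hcnt : ∀ (π : Equiv.Perm (Fin n)) (a : Fin (k+1)), (w π).count a = n := fun π a =>
    count_all (by simp) (hw π) a
  have hplen : ∀ (π : Equiv.Perm (Fin n)) (i : ℕ), i + 1 ≤ k →
      (pairProj i (w π)).length = 2*n :=
    fun π i hik => pairProj_length (hcnt π) hik
  set F : Equiv.Perm (Fin n) → (Fin k → Fin (2*n) → Bool) := fun π i t =>
    ((pairProj (i:ℕ) (w π)).map (fun a : Fin (k+1) => decide ((a:ℕ) = (i:ℕ)))).getD (t:ℕ) false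
    with hFdef
  have hinj : Function.Injective F := by
    intro π π' hF
    have hproj : ∀ i : ℕ, i + 1 ≤ k → pairProj i (w π) = pairProj i (w π') := by
      intro i hik
      have hifin : i < k := by omega
      have hmap : (pairProj i (w π)).map (fun a : Fin (k+1) => decide ((a:ℕ) = i)) =
          (pairProj i (w π')).map (fun a : Fin (k+1) => decide ((a:ℕ) = i)) := by
        apply List.ext_getElem
        · simp [hplen π i hik, hplen π' i hik]
        · intro t h1 h2
          have ht : t < 2*n := by simpa [hplen π i hik] using h1
          have hFt := congrFun (congrFun hF ⟨i, hifin⟩) ⟨t, ht⟩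
          simp only [hFdef] at hFt
          rw [List.getD_eq_getElem _ _ (by simpa using h1),
            List.getD_eq_getElem _ _ (by simpa using h2)] at hFt
          simpa using hFt
      have h1 := pairProj_recover hik (pairProj i (w π)) (fun a ha => (mem_pairProj ha).2)
      have h2 := pairProj_recover hik (pairProj i (w π')) (fun a ha => (mem_pairProj ha).2)
      rw [← h1, ← h2, hmap]
    have hact := proj_determines (w π).length (w π) (w π') rfl
      (fun a => by rw [hcnt π a, hcnt π' a]) hproj (initConf n k)
    rw [hw π, hw π'] at hact
    injection hact with hact
    have hout := congrFun hact ⟨k+1, by omega⟩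
    have hcond : ((⟨k+1, by omega⟩ : Fin (k+2)) : ℕ) = k+1 := rfl
    simp only [finalConf, hcond, if_pos] at hout
    have hfn := List.ofFn_injective hout
    apply Equiv.ext
    intro j
    have hj := congrFun hfn j
    exact Fin.ext (by omega)
  calc Nat.factorial n = Fintype.card (Equiv.Perm (Fin n)) := by
        rw [Fintype.card_perm, Fintype.card_fin]
    _ ≤ Fintype.card (Fin k → Fin (2*n) → Bool) := Fintype.card_le_of_injective F hinj
    _ = (2 ^ (2*n)) ^ k := by
        rw [Fintype.card_fun, Fintype.card_fun]
        simp

lemma fact_lb : ∀ m : ℕ, (m:ℝ)^m ≤ Real.exp 1 ^ m * (Nat.factorial m) := by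
  intro m
  induction m with
  | zero => simp
  | succ m ih =>
      have hstep : ((m+1:ℕ):ℝ)^m ≤ Real.exp 1 * (m:ℝ)^m := by
        rcases Nat.eq_zero_or_pos m with hm | hm
        · subst hm
          simpa using Real.one_le_exp (by norm_num)
        · have hmpos : (0:ℝ) < m := by exact_mod_cast hm
          have h1 : ((m+1:ℕ):ℝ) ≤ (m:ℝ) * Real.exp (1/(m:ℝ)) := by
            have h2 := Real.add_one_le_exp (1/(m:ℝ))
            push_cast
            calc (m:ℝ) + 1 = (m:ℝ) * (1/(m:ℝ) + 1) := by field_simp; ring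
              _ ≤ (m:ℝ) * Real.exp (1/(m:ℝ)) := by
                  apply mul_le_mul_of_nonneg_left h2 hmpos.le
          calc ((m+1:ℕ):ℝ)^m ≤ ((m:ℝ) * Real.exp (1/(m:ℝ)))^m := by
                apply pow_le_pow_left₀ (by positivity) h1
            _ = (m:ℝ)^m * Real.exp (1/(m:ℝ))^m := by rw [mul_pow]
            _ = (m:ℝ)^m * Real.exp 1 := by
                rw [← Real.exp_nat_mul]
                congr 1
                field_simp
            _ = Real.exp 1 * (m:ℝ)^m := by ring
      have hfs : (Nat.factorial (m+1) : ℝ) = (m+1) * Nat.factorial m := by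
        rw [Nat.factorial_succ]; push_cast; ring
      calc ((m+1:ℕ):ℝ)^(m+1) = ((m+1:ℕ):ℝ)^m * ((m+1:ℕ):ℝ) := by rw [pow_succ]
        _ ≤ (Real.exp 1 * (m:ℝ)^m) * ((m+1:ℕ):ℝ) := by
            apply mul_le_mul_of_nonneg_right hstep (by positivity)
        _ ≤ (Real.exp 1 * (Real.exp 1 ^ m * (Nat.factorial m))) * ((m+1:ℕ):ℝ) := by
            apply mul_le_mul_of_nonneg_right _ (by positivity)
            apply mul_le_mul_of_nonneg_left ih (Real.exp_pos 1).le
        _ = Real.exp 1 ^ (m+1) * (Nat.factorial (m+1)) := by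
            rw [hfs, pow_succ]
            push_cast
            ring

/-- There is a constant `c` with `kₙ ≥ (1/2)·log₂ n − c` for all `n ≥ 2`. -/
theorem kStacks_lower_bound_half : ∃ c : ℝ, ∀ n : ℕ, 2 ≤ n →
    (kStacks n : ℝ) ≥ (1 / 2) * Real.logb 2 n - c := by
  refine ⟨1, ?_⟩
  intro n hn
  set k := kStacks n with hk
  have hmem : ∀ π : Equiv.Perm (Fin n), Generates n k π := by
    have : n ∈ {k | ∀ π : Equiv.Perm (Fin n), Generates n k π} := fun π => generates_self π
    exact Nat.sInf_mem ⟨n, this⟩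
  have hcard := card_bound hmem
  -- pass to reals
  have hnpos : (0:ℝ) < n := by exact_mod_cast (by omega : 0 < n)
  have hcardR : ((Nat.factorial n : ℕ):ℝ) ≤ ((2:ℝ) ^ (2*n)) ^ k := by
    exact_mod_cast hcard
  have h2 : (n:ℝ)^n ≤ Real.exp 1 ^ n * ((2:ℝ)^(2*n))^k :=
    le_trans (fact_lb n) (by
      apply mul_le_mul_of_nonneg_left hcardR (by positivity))
  have hlog := (Real.log_le_log_iff (by positivity) (by positivity)).mpr h2
  rw [Real.log_pow, Real.log_mul (by positivity) (by positivity), Real.log_pow,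
    Real.log_pow, Real.log_pow, Real.log_exp] at hlog
  push_cast at hlog
  have hL : (0.5:ℝ) < Real.log 2 := by
    have := Real.log_two_gt_d9
    norm_num at this ⊢
    linarith
  have h3 : Real.log n - 1 ≤ 2 * (k:ℝ) * Real.log 2 := by
    nlinarith [hlog, hnpos]
  rw [ge_iff_le, Real.logb, sub_le_iff_le_add]
  have hexp : (1:ℝ)/2 * (Real.log n / Real.log 2) = Real.log n / (2 * Real.log 2) := by
    ring
  rw [hexp, div_le_iff₀ (by linarith)]
  nlinarith [h3, hL]
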